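/- arXiv:1204.5582 — 3 statements merged into one kernel-verified Lean document; each statement's English description precedes it below -/
import Mathlib

section
/- The set difference function diff(- /a,b) = a \ b is in the class PCSF⁻. -/
open scoped Classical

noncomputable section

namespace PCSFPaper

/-! ## Basic ZF-set helpers -/

/-- Image `{f z : z ∈ x}` of a ZF-set under an arbitrary class function. -/
noncomputable def zImage (f : ZFSet → ZFSet) (x : ZFSet) : ZFSet :=
  @ZFSet.image f (Classical.allZFSetDefinable fun s => f (s 0)) x

/-- Kuratowski ordered pair `⟨c,d⟩ = {{c},{c,d}}`. -/
def kpair (c d : ZFSet) : ZFSet := {{c}, {c, d}}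

/-! ## Δ₀ formulas of the language of set theory -/

/-- Δ₀ (bounded) formulas in the first-order language of set theory,
with `k` free variables.  In the bounded quantifiers `ball i φ`/`bex i φ`
the newly bound variable (ranging over the elements of variable `i`)
becomes variable `0` of `φ`, the old variables being shifted up by one. -/
inductive D0 : ℕ → Type
  | mem {k : ℕ} (i j : Fin k) : D0 k
  | eq {k : ℕ} (i j : Fin k) : D0 k
  | not {k : ℕ} : D0 k → D0 k
  | and {k : ℕ} : D0 k → D0 k → D0 k
  | or {k : ℕ} : D0 k → D0 k → D0 k
  | ball {k : ℕ} (i : Fin k) : D0 (k + 1) → D0 k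
  | bex {k : ℕ} (i : Fin k) : D0 (k + 1) → D0 k

/-- Satisfaction of Δ₀ formulas in the universe of ZF-sets. -/
def D0.Sat : ∀ {k : ℕ}, D0 k → (Fin k → ZFSet) → Prop
  | _, .mem i j, v => v i ∈ v j
  | _, .eq i j, v => v i = v j
  | _, .not φ, v => ¬ φ.Sat v
  | _, .and φ ψ, v => φ.Sat v ∧ ψ.Sat v
  | _, .or φ ψ, v => φ.Sat v ∨ ψ.Sat v
  | _, .ball i φ, v => ∀ z ∈ v i, φ.Sat (Fin.cons z v)
  | _, .bex i φ, v => ∃ z ∈ v i, φ.Sat (Fin.cons z v)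

/-- A `k`-ary relation on sets is Δ₀ iff it is defined by some Δ₀ formula. -/
def IsDelta0 {k : ℕ} (R : (Fin k → ZFSet) → Prop) : Prop :=
  ∃ φ : D0 k, ∀ v, R v ↔ φ.Sat v

/-! ## The classes PCSF⁻ and PCSF -/

/-- The class `PCSF⁻` of predicatively computable set functions taking only
safe arguments: generated from projections, pairing, null, union and the
membership conditional, by composition and safe separation. -/
inductive PCSFminus : ∀ m : ℕ, ((Fin m → ZFSet) → ZFSet) → Prop
  | proj {m : ℕ} (j : Fin m) : PCSFminus m fun a => a j
  | pair : PCSFminus 2 fun a => {a 0, a 1}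
  | null : PCSFminus 0 fun _ => ∅
  | union : PCSFminus 1 fun a => ZFSet.sUnion (a 0)
  | cond : PCSFminus 4 fun a => if a 2 ∈ a 3 then a 0 else a 1
  | comp {m k : ℕ} (h : (Fin k → ZFSet) → ZFSet) (t : Fin k → (Fin m → ZFSet) → ZFSet) :
      PCSFminus k h → (∀ i, PCSFminus m (t i)) →
      PCSFminus m fun a => h fun i => t i a
  | sep {m : ℕ} (h : (Fin (m + 1) → ZFSet) → ZFSet) :
      PCSFminus (m + 1) h →
      PCSFminus (m + 1) fun a =>
        ZFSet.sep (fun b => h (Fin.snoc (Fin.init a) b) ≠ ∅) (a (Fin.last m))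

/-- The class `PCSF` of predicatively computable set functions, with `n` normal
and `m` safe arguments: generated from `PCSF⁻` (whose arguments are all safe)
and projections by safe composition and predicative set recursion.  The
recursion rule is stated via its defining equation (which determines the
function uniquely, by ∈-induction); the recursion argument `x` is the first
normal argument, and the set `{f(z,ȳ/ā) : z ∈ x}` of previous values is passed
to `h` as a last, safe, argument. -/
inductive PCSF : ∀ n m : ℕ, ((Fin n → ZFSet) → (Fin m → ZFSet) → ZFSet) → Prop
  | ofMinus {m : ℕ} (h : (Fin m → ZFSet) → ZFSet) :
      PCSFminus m h → PCSF 0 m fun _ a => h a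
  | proj {n m : ℕ} (j : Fin (n + m)) : PCSF n m fun x a => Fin.append x a j
  | comp {n m k l : ℕ} (h : (Fin k → ZFSet) → (Fin l → ZFSet) → ZFSet)
      (r : Fin k → (Fin n → ZFSet) → (Fin 0 → ZFSet) → ZFSet)
      (t : Fin l → (Fin n → ZFSet) → (Fin m → ZFSet) → ZFSet) :
      PCSF k l h → (∀ i, PCSF n 0 (r i)) → (∀ i, PCSF n m (t i)) →
      PCSF n m fun x a => h (fun i => r i x Fin.elim0) fun i => t i x a
  | recur {n m : ℕ} (h : (Fin (n + 1) → ZFSet) → (Fin (m + 1) → ZFSet) → ZFSet)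
      (f : (Fin (n + 1) → ZFSet) → (Fin m → ZFSet) → ZFSet) :
      PCSF (n + 1) (m + 1) h →
      (∀ (x : ZFSet) (y : Fin n → ZFSet) (a : Fin m → ZFSet),
        f (Fin.cons x y) a =
          h (Fin.cons x y) (Fin.snoc a (zImage (fun z => f (Fin.cons z y) a) x))) →
      PCSF (n + 1) m f

/-- A relation is in `PCSF` iff its characteristic function
(`1 = {∅}` for true, `0 = ∅` for false) is in `PCSF`. -/
def PCSFRel (n m : ℕ) (R : (Fin n → ZFSet) → (Fin m → ZFSet) → Prop) : Prop :=
  PCSF n m fun x a => if R x a then ({∅} : ZFSet) else ∅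

/-! ## Transitive closure, hereditary finiteness -/

/-- Transitive closure `TC(x) = x ∪ ⋃{TC(y) : y ∈ x}` by ∈-recursion. -/
noncomputable def TCset : ZFSet → ZFSet :=
  ZFSet.mem_wf.fix fun x ih =>
    x ∪ ZFSet.sUnion (zImage (fun y => if h : y ∈ x then ih y h else ∅) x)

/-- A set is hereditarily finite iff its transitive closure is finite. -/
def IsHF (x : ZFSet) : Prop := (TCset x).toSet.Finite

/-- `cT x` = cardinality of the transitive closure of `x`
(junk value `0` if infinite). -/
noncomputable def cT (x : ZFSet) : ℕ := (TCset x).toSet.ncard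

/-- The finite union `A₁ ∪ ⋯ ∪ Aₘ`. -/
def unionFin {m : ℕ} (A : Fin m → ZFSet) : ZFSet :=
  (List.ofFn A).foldr (· ∪ ·) ∅

/-! ## The encoding ν of binary strings, application, product -/

/-- The von Neumann numeral 1 = {∅}. -/
def zOne : ZFSet := {∅}

/-- The von Neumann numeral 2 = {∅,{∅}}. -/
def zTwo : ZFSet := {∅, {∅}}

/-- The encoding of binary strings (head of the list = last appended bit):
`ν(ε) = ∅` and `ν(s i) = ⟨i+1, ν s⟩`, a bit `i ∈ {0,1}` being represented
by the boolean `i = 1`. -/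
def nu : List Bool → ZFSet
  | [] => ∅
  | b :: s => kpair (if b then zTwo else zOne) (nu s)

/-- `zApp b c = b'c = ⋃{d ∈ ⋃⋃b : ⟨c,d⟩ ∈ b}` (which is `⋃{d : ⟨c,d⟩ ∈ b}`,
since every such `d` belongs to `⋃⋃b`). -/
def zApp (b c : ZFSet) : ZFSet :=
  ZFSet.sUnion (ZFSet.sep (fun d => kpair c d ∈ b) (ZFSet.sUnion (ZFSet.sUnion b)))

/-- Cartesian product `a × b = {⟨u,v⟩ : u ∈ a, v ∈ b}` (with Kuratowski pairs). -/
noncomputable def zProd (a b : ZFSet) : ZFSet :=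
  ZFSet.sUnion (zImage (fun u => zImage (fun v => kpair u v) b) a)

/-! ## Polynomial time computability on binary strings -/

/-- The trivial encoding of binary strings over the alphabet `Bool`. -/
def boolListEncoding : Computability.Encoding (List Bool) Bool where
  encode := id
  decode := fun l => some l
  decode_encode := fun _ => rfl

/-- Encoding of a tuple of binary strings over the alphabet `Option Bool`:
the strings are listed in order, each terminated by the separator `none`. -/
def encTuple : (k : ℕ) → (Fin k → List Bool) → List (Option Bool)
  | 0, _ => []
  | k + 1, v => (v 0).map some ++ none :: encTuple k (Fin.tail v)

/-- Splits off the first separator-terminated block. -/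
def splitFirst : List (Option Bool) → List Bool × List (Option Bool)
  | [] => ([], [])
  | none :: l => ([], l)
  | some b :: l => ((splitFirst l).1.cons b, (splitFirst l).2)

theorem splitFirst_encode (s : List Bool) (rest : List (Option Bool)) :
    splitFirst (s.map some ++ none :: rest) = (s, rest) := by
  induction s with
  | nil => rfl
  | cons b s ih => simp [splitFirst, ih]

/-- Decoding of tuples of binary strings. -/
def decTuple : (k : ℕ) → List (Option Bool) → Option (Fin k → List Bool)
  | 0, _ => some Fin.elim0
  | k + 1, l =>
    (decTuple k (splitFirst l).2).map fun v => Fin.cons (splitFirst l).1 v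

theorem decTuple_encTuple : ∀ (k : ℕ) (v : Fin k → List Bool),
    decTuple k (encTuple k v) = some v := by
  intro k
  induction k with
  | zero =>
    intro v
    simp only [decTuple]
    congr
    exact funext fun i => i.elim0
  | succ k ih =>
    intro v
    simp [decTuple, encTuple, splitFirst_encode, ih (Fin.tail v), Fin.cons_self_tail]

/-- The standard encoding of tuples of binary strings. -/
def tupleEncoding (k : ℕ) : Computability.Encoding (Fin k → List Bool) (Option Bool) where
  encode := encTuple k
  decode := decTuple k
  decode_encode := decTuple_encTuple k

/-- A function on tuples of binary strings is polynomial time computable iff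
some two-stack machine computes it in polynomial time (Mathlib's notion). -/
def PolyTimeStringFun {k : ℕ} (f : (Fin k → List Bool) → List Bool) : Prop :=
  Nonempty (Turing.TM2ComputableInPolyTime (tupleEncoding k).encode boolListEncoding.encode f)

/-- Polynomial time computability for functions on ℕ,
with respect to the standard binary encoding of naturals. -/
def PolyTimeNatFun (f : ℕ → ℕ) : Prop :=
  Nonempty (Turing.TM2ComputableInPolyTime Computability.encodingNatBool.encode
    Computability.encodingNatBool.encode f)

/-! ## A feasible encoding of lists of naturals by naturals -/

/-- Reads a list of bits (least significant first) as a natural number. -/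
def bitsToNat (l : List Bool) : ℕ := l.foldr (fun b n => Nat.bit b n) 0

/-- A standard feasible (linear size) encoding of lists of natural numbers:
every bit of the binary expansion of an entry is escaped as `[false, b]`,
entries are terminated by `[true, true]`, and a final `true` protects
leading zeros. -/
def encodeNatList (l : List ℕ) : ℕ :=
  bitsToNat
    ((l.map fun n => (Nat.bits n).foldr (fun b acc => false :: b :: acc) [true, true]).foldr
        (· ++ ·) [true])

/-! ## Rooted DAGs encoding hereditarily finite sets -/

/-- A rooted DAG: a finite set `V` of natural numbers, edges `E ⊆ V × V`
going strictly downwards, and a root `r ∈ V` which is the only node of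
indegree zero. -/
structure RootedDag where
  V : Finset ℕ
  E : Finset (ℕ × ℕ)
  r : ℕ
  edge_mem : ∀ e ∈ E, e.1 ∈ V ∧ e.2 ∈ V
  root_mem : r ∈ V
  root_indeg : ∀ e ∈ E, e.2 ≠ r
  reach_nonroot : ∀ a ∈ V, a ≠ r → ∃ b ∈ V, (b, a) ∈ E
  desc : ∀ e ∈ E, e.2 < e.1

namespace RootedDag

/-- The children of a node. -/
def children (G : RootedDag) (a : ℕ) : Finset ℕ :=
  (G.E.filter fun e => e.1 = a).image Prod.snd

theorem children_lt (G : RootedDag) {a b : ℕ} (h : b ∈ G.children a) : b < a := by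
  simp only [children, Finset.mem_image, Finset.mem_filter] at h
  obtain ⟨e, ⟨heE, he1⟩, he2⟩ := h
  have := G.desc e heE
  omega

/-- The hereditarily finite set encoded at a node:
`set_G(a) = {set_G(b) : (a,b) ∈ E}`. -/
def setAt (G : RootedDag) (a : ℕ) : ZFSet.{0} :=
  (((G.children a).attach.toList).map fun b => G.setAt b.1).foldr insert ∅
termination_by a
decreasing_by exact G.children_lt b.2

/-- The hereditarily finite set encoded by a rooted DAG. -/
def set (G : RootedDag) : ZFSet.{0} := G.setAt G.r

/-- A DAG is fully collapsed iff distinct nodes encode distinct sets. -/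
def FullyCollapsed (G : RootedDag) : Prop :=
  ∀ a ∈ G.V, ∀ b ∈ G.V, G.setAt a = G.setAt b → a = b

/-- Reachability along edges. -/
def Reaches (G : RootedDag) (a b : ℕ) : Prop :=
  Relation.ReflTransGen (fun u v => (u, v) ∈ G.E) a b

/-- The node set of the sub-DAG `G|a` of nodes reachable from `a`. -/
noncomputable def reachSet (G : RootedDag) (a : ℕ) : Finset ℕ :=
  G.V.filter fun b => G.Reaches a b

/-- A DAG is balanced iff each node `a` is at most the number of nodes of `G|a`. -/
def Balanced (G : RootedDag) : Prop :=
  ∀ a ∈ G.V, a ≤ (G.reachSet a).card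

end RootedDag

/-- The numeric code `⌈G⌉` of a rooted DAG: the code of the triple consisting
of (the code of) the sorted list of vertices, (the code of) the sorted list of
pair-coded edges, and the root. -/
noncomputable def RootedDag.code (G : RootedDag) : ℕ :=
  encodeNatList [encodeNatList (G.V.sort (· ≤ ·)),
    encodeNatList ((G.E.image fun e => Nat.pair e.1 e.2).sort (· ≤ ·)), G.r]

/-- The finite set `{l₀, …, l_{n-1}}` as a ZF-set. -/
def zSetOfList (l : List ZFSet) : ZFSet := l.foldr insert ∅

namespace PCSFminus

variable {m : ℕ}

theorem reindex {k : ℕ} {f : (Fin k → ZFSet) → ZFSet} (hf : PCSFminus k f)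
    (σ : Fin k → Fin m) : PCSFminus m fun a => f (a ∘ σ) :=
  comp f (fun i a => a (σ i)) hf fun i => proj (σ i)

theorem const_empty (m : ℕ) : PCSFminus m fun _ => ∅ :=
  comp _ Fin.elim0 null fun i => i.elim0

theorem singleton {f : (Fin m → ZFSet) → ZFSet} (hf : PCSFminus m f) :
    PCSFminus m fun a => {f a} := by
  simpa using comp _ ![f, f] pair fun i => by fin_cases i <;> exact hf

theorem ite_mem {f g s t : (Fin m → ZFSet) → ZFSet} (hf : PCSFminus m f) (hg : PCSFminus m g)
    (hs : PCSFminus m s) (ht : PCSFminus m t) :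
    PCSFminus m fun a => if s a ∈ t a then f a else g a :=
  comp _ ![f, g, s, t] cond fun i => by fin_cases i <;> assumption

theorem sep_of {h : (Fin (m + 1) → ZFSet) → ZFSet} {c : (Fin m → ZFSet) → ZFSet}
    (hh : PCSFminus (m + 1) h) (hc : PCSFminus m c) :
    PCSFminus m fun a => ZFSet.sep (fun b => h (Fin.snoc a b) ≠ ∅) (c a) := by
  have hsnoc : ∀ i, PCSFminus m fun a => Fin.snoc (α := fun _ => ZFSet) a (c a) i :=
    Fin.lastCases (by simpa using hc) fun j => by simpa using proj j
  simpa using comp _ _ (sep h hh) hsnoc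

theorem sdiff {f g : (Fin m → ZFSet) → ZFSet} (hf : PCSFminus m f) (hg : PCSFminus m g) :
    PCSFminus m fun a => f a \ g a := by
  have htest : PCSFminus (m + 1) fun x =>
      if x (Fin.last m) ∈ g (Fin.init x) then ∅ else {∅} :=
    ite_mem (const_empty _) (const_empty _).singleton (proj _) (hg.reindex Fin.castSucc)
  have hsingleton_ne : ({∅} : ZFSet) ≠ ∅ := fun h =>
    ZFSet.not_nonempty_empty (h ▸ ZFSet.singleton_nonempty ∅)
  convert sep_of htest hf using 2 with a
  ext z
  simpa [ZFSet.mem_sdiff, ZFSet.mem_sep] using fun _ _ => hsingleton_ne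

end PCSFminus

/-- The set difference `diff(−/a,b) = a \ b` is in `PCSF⁻`. -/
theorem diff_mem_PCSFminus : PCSFminus 2 fun a => a 0 \ a 1 :=
  (PCSFminus.proj 0).sdiff (PCSFminus.proj 1)

end PCSFPaper
end
end

section
/- If g(x̄/ā,b̄) is in PCSF, then the function f defined by f(x̄,ȳ/b̄) = g(x̄/ȳ,b̄) (i.e., moving some safe arguments of g into normal argument positions) is also in PCSF. -/
open scoped Classical

noncomputable section

namespace PCSFPaper

namespace PCSF

theorem comp_proj {n m k l : ℕ} {g : (Fin k → ZFSet) → (Fin l → ZFSet) → ZFSet}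
    (hg : PCSF k l g) (σ : Fin k → Fin n) (τ : Fin l → Fin (n + m)) :
    PCSF n m fun x a => g (fun i => x (σ i)) (fun j => Fin.append x a (τ j)) := by
  have h := PCSF.comp g (fun i x a => Fin.append x a (Fin.castAdd 0 (σ i)))
    (fun j x a => Fin.append x a (τ j)) hg (fun _ => proj _) (fun _ => proj _)
  simpa only [Fin.append_left] using h

end PCSF

/-- If `g(x̄/ā,b̄) ∈ PCSF` then so is
`f(x̄,ȳ/b̄) = g(x̄/ȳ,b̄)`, obtained by moving safe arguments of `g`
into normal positions. -/
theorem pcsf_safe_to_normal {n k m : ℕ}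
    (g : (Fin n → ZFSet) → (Fin (k + m) → ZFSet) → ZFSet)
    (hg : PCSF n (k + m) g) :
    PCSF (n + k) m fun x b =>
      g (fun i => x (Fin.castAdd k i)) (Fin.append (fun j => x (Fin.natAdd n j)) b) := by
  convert hg.comp_proj (Fin.castAdd k)
    (Fin.addCases (Fin.castAdd m ∘ Fin.natAdd n) (Fin.natAdd (n + k))) using 4 with x b
  funext j
  induction j using Fin.addCases <;> simp

end PCSFPaper
end
end

section
/- If h is in PCSF, then so is the function f defined by the recursion f(x,ȳ/ā) = h(x,ȳ/ā, ⋃{f(z,ȳ/ā) : z∈x}), in which the recursion value substituted in the safe position is the union of the values at the elements of x. -/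
open scoped Classical

noncomputable section

namespace PCSFPaper

/-! Taking the union is a `PCSF⁻` operation on a safe argument, so it can be absorbed into `h`:
`h'(x̄/ā,c) = h(x̄/ā,⋃c)` is in `PCSF`, and `f` arises from `h'` by predicative set recursion. -/

namespace PCSF

theorem proj_normal {n m : ℕ} (i : Fin n) : PCSF n m fun x _ => x i := by
  simpa only [Fin.append_left] using PCSF.proj (n := n) (m := m) (Fin.castAdd m i)

theorem proj_safe {n m : ℕ} (j : Fin m) : PCSF n m fun _ a => a j := by
  simpa only [Fin.append_right] using PCSF.proj (n := n) (m := m) (Fin.natAdd n j)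

theorem comp_safe {n m l : ℕ} {h : (Fin n → ZFSet) → (Fin l → ZFSet) → ZFSet}
    {t : Fin l → (Fin n → ZFSet) → (Fin m → ZFSet) → ZFSet}
    (hh : PCSF n l h) (ht : ∀ i, PCSF n m (t i)) :
    PCSF n m fun x a => h x fun i => t i x a :=
  PCSF.comp h (fun i x _ => x i) t hh (fun i => proj_normal i) ht

theorem sUnion_safe {n m : ℕ} (j : Fin m) : PCSF n m fun _ a => ZFSet.sUnion (a j) :=
  PCSF.comp (fun _ a => ZFSet.sUnion (a 0)) (fun i => i.elim0) (fun _ _ a => a j)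
    (PCSF.ofMinus _ PCSFminus.union) (fun i => i.elim0) fun _ => proj_safe j

theorem comp_sUnion_last {n m : ℕ} {h : (Fin n → ZFSet) → (Fin (m + 1) → ZFSet) → ZFSet}
    (hh : PCSF n (m + 1) h) :
    PCSF n (m + 1) fun x a => h x (Fin.snoc (Fin.init a) (ZFSet.sUnion (a (Fin.last m)))) := by
  refine comp_safe (t := fun i _ a => Fin.snoc (Fin.init a) (ZFSet.sUnion (a (Fin.last m))) i)
    hh fun i => ?_
  induction i using Fin.lastCases with
  | last => simpa only [Fin.snoc_last] using sUnion_safe (Fin.last m)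
  | cast j => simpa only [Fin.snoc_castSucc, Fin.init] using proj_safe j.castSucc

end PCSF

/-- `PCSF` is closed under the recursion scheme
`f(x,ȳ/ā) = h(x,ȳ/ā, ⋃{f(z,ȳ/ā) : z ∈ x})`, where the recursion value
passed in the safe position is the *union* of the previous values. -/
theorem pcsf_union_recursion {n m : ℕ}
    (h : (Fin (n + 1) → ZFSet) → (Fin (m + 1) → ZFSet) → ZFSet)
    (f : (Fin (n + 1) → ZFSet) → (Fin m → ZFSet) → ZFSet)
    (hh : PCSF (n + 1) (m + 1) h)
    (hf : ∀ (x : ZFSet) (y : Fin n → ZFSet) (a : Fin m → ZFSet),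
      f (Fin.cons x y) a =
        h (Fin.cons x y)
          (Fin.snoc a (ZFSet.sUnion (zImage (fun z => f (Fin.cons z y) a) x)))) :
    PCSF (n + 1) m f := by
  refine PCSF.recur _ f (PCSF.comp_sUnion_last hh) fun x y a => ?_
  rw [hf, Fin.init_snoc, Fin.snoc_last]

end PCSFPaper
end
end
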